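/- Hyperbolic L²-non-concentration: let (r_k) ⊂ (0,1) be a sequence tending to 1 such that inf_{f ∈ Pol(ℂ)} ρ_{H,r_k}(f) → ρ_H as k → ∞; set δ_k = 1−r_k, and for each k let f_k be a minimizer of ρ_{H,r_k}. Then (1/log(1/(1−r_k²))) ∫_{𝔸(r_k(1−δ_k), r_k)} |f_k(z)|² (1−|z|²) dA(z) → 0 as k → ∞. -/

import Mathlib

open MeasureTheory Filter Set Metric Polynomial
open scoped ENNReal Topology NNReal

noncomputable section

/-- Normalized area measure on `ℂ`: `dA = (1/π)·(Lebesgue measure)`. -/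
def dA : Measure ℂ := (ENNReal.ofReal Real.pi)⁻¹ • volume

/-- The open annulus `𝔸(s,t) = {z : s < |z| < t}`. -/
def ann (s t : ℝ) : Set ℂ := ball (0:ℂ) t \ closedBall (0:ℂ) s

/-- The Cauchy–Riemann operator `∂̄u = (u_x + i u_y)/2` for complex-valued functions. -/
def dbar (u : ℂ → ℂ) (z : ℂ) : ℂ :=
  (fderiv ℝ u z 1 + Complex.I * fderiv ℝ u z Complex.I) / 2

/-- The Cauchy–Riemann operator `∂̄u = (u_x + i u_y)/2` for real-valued functions. -/
def dbarR (u : ℂ → ℝ) (z : ℂ) : ℂ :=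
  (((fderiv ℝ u z 1 : ℝ) : ℂ) + Complex.I * ((fderiv ℝ u z Complex.I : ℝ) : ℂ)) / 2

/-- The planar discrepancy functional `ρ_{C,γ}(f) = ∫_𝔻 (|f(z)|e^{-γ|z|²} - 1)² dA(z)`. -/
def rhoC (γ : ℝ) (f : ℂ → ℂ) : ℝ≥0∞ :=
  ∫⁻ z in ball (0:ℂ) 1,
    ENNReal.ofReal ((‖f z‖ * Real.exp (-γ * ‖z‖ ^ 2) - 1) ^ 2) ∂dA

/-- The tight planar discrepancy functional
`ρ*_{C,γ}(f) = ∫_ℂ (|f(z)|e^{-γ|z|²} - 1_𝔻(z))² dA(z)`. -/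
def rhoCStar (γ : ℝ) (f : ℂ → ℂ) : ℝ≥0∞ :=
  ∫⁻ z, ENNReal.ofReal ((‖f z‖ * Real.exp (-γ * ‖z‖ ^ 2)
      - (ball (0:ℂ) 1).indicator (fun _ => (1:ℝ)) z) ^ 2) ∂dA

/-- The planar discrepancy density `ρ_C`. -/
def rhoCd : ℝ≥0∞ :=
  liminf (fun γ : ℝ => ⨅ p : Polynomial ℂ, rhoC γ fun z => p.eval z) atTop

/-- The tight planar discrepancy density `ρ_C*`. -/
def rhoCdStar : ℝ≥0∞ :=
  liminf (fun γ : ℝ => ⨅ p : Polynomial ℂ, rhoCStar γ fun z => p.eval z) atTop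

/-- The hyperbolic discrepancy functional
`ρ_{H,r}(f) = (1/log(1/(1-r²))) ∫_{D(0,r)} ((1-|z|²)|f(z)| - 1)² dA(z)/(1-|z|²)`. -/
def rhoH (r : ℝ) (f : ℂ → ℂ) : ℝ≥0∞ :=
  (ENNReal.ofReal (Real.log (1 / (1 - r ^ 2))))⁻¹ *
    ∫⁻ z in ball (0:ℂ) r,
      ENNReal.ofReal (((1 - ‖z‖ ^ 2) * ‖f z‖ - 1) ^ 2
        / (1 - ‖z‖ ^ 2)) ∂dA

/-- The tight hyperbolic discrepancy functional
`ρ*_{H,r}(f) = (1/log(1/(1-r²))) ∫_𝔻 ((1-|z|²)|f(z)| - 1_{D(0,r)}(z))² dA(z)/(1-|z|²)`. -/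
def rhoHStar (r : ℝ) (f : ℂ → ℂ) : ℝ≥0∞ :=
  (ENNReal.ofReal (Real.log (1 / (1 - r ^ 2))))⁻¹ *
    ∫⁻ z in ball (0:ℂ) 1,
      ENNReal.ofReal (((1 - ‖z‖ ^ 2) * ‖f z‖
        - (ball (0:ℂ) r).indicator (fun _ => (1:ℝ)) z) ^ 2
        / (1 - ‖z‖ ^ 2)) ∂dA

/-- The hyperbolic discrepancy density `ρ_H`. -/
def rhoHd : ℝ≥0∞ :=
  liminf (fun r : ℝ => ⨅ p : Polynomial ℂ, rhoH r fun z => p.eval z) (𝓝[<] (1:ℝ))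

/-- The tight hyperbolic discrepancy density `ρ_H*`. -/
def rhoHdStar : ℝ≥0∞ :=
  liminf (fun r : ℝ => ⨅ p : Polynomial ℂ, rhoHStar r fun z => p.eval z) (𝓝[<] (1:ℝ))

/-- `f` is a minimizer of `ρ_{C,γ}` among holomorphic functions on `𝔻`. -/
def IsMinC (γ : ℝ) (f : ℂ → ℂ) : Prop :=
  DifferentiableOn ℂ f (ball 0 1) ∧
    ∀ g : ℂ → ℂ, DifferentiableOn ℂ g (ball 0 1) → rhoC γ f ≤ rhoC γ g

/-- `f` is a minimizer of `ρ_{H,r}` among holomorphic functions on `𝔻`. -/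
def IsMinH (r : ℝ) (f : ℂ → ℂ) : Prop :=
  DifferentiableOn ℂ f (ball 0 1) ∧
    ∀ g : ℂ → ℂ, DifferentiableOn ℂ g (ball 0 1) → rhoH r f ≤ rhoH r g

end

/-!
Write `L(r) = log(1/(1-r²)) = ∫_{D(0,r)} dA/(1-|z|²)`; testing with `f = 0` gives `ρ_H ≤ 1`.
A minimizer `f_k` has `ρ_{H,r_k}(f_k) ≤ inf_p ρ_{H,r_k}(p) → ρ_H`, and since Taylor polynomials
approximate `f_k` uniformly on `D(0, r_k²)`, also `ρ_{H,r_k²}(f_k) ≥ inf_p ρ_{H,r_k²}(p) ≳ ρ_H`.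
Here `r_k(1-δ_k) = r_k²` and `L(r) - L(r²) = log(1+r²) ≤ 1` while `L(r) → ∞`, so the discrepancy
of `f_k` over the annulus `𝔸(r_k², r_k)`, which is the difference of the two discrepancies over
disks, is `o(L(r_k))`. Finally `|f|²(1-|z|²) ≤ 2((1-|z|²)|f| - 1)²/(1-|z|²) + 2/(1-|z|²)`, and the
last term is at most `2/(1-r²)` on `𝔸(r², r)`, an annulus of area `r² - r⁴`.
-/

noncomputable def logNormalizer (r : ℝ) : ℝ≥0∞ := ENNReal.ofReal (Real.log (1 / (1 - r ^ 2)))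

noncomputable def discrepancy (f : ℂ → ℂ) (S : Set ℂ) : ℝ≥0∞ :=
  ∫⁻ z in S, ENNReal.ofReal (((1 - ‖z‖ ^ 2) * ‖f z‖ - 1) ^ 2 / (1 - ‖z‖ ^ 2)) ∂dA

lemma rhoH_eq (r : ℝ) (f : ℂ → ℂ) :
    rhoH r f = (logNormalizer r)⁻¹ * discrepancy f (ball 0 r) := rfl

section LogNormalizer

lemma logNormalizer_ne_zero {r : ℝ} (hr0 : 0 < r) (hr1 : r < 1) : logNormalizer r ≠ 0 := by
  rw [logNormalizer, ne_eq, ENNReal.ofReal_eq_zero, not_le]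
  exact Real.log_pos (by rw [lt_div_iff₀ (by nlinarith)]; nlinarith)

lemma logNormalizer_ne_top (r : ℝ) : logNormalizer r ≠ ⊤ := ENNReal.ofReal_ne_top

lemma discrepancy_ball_eq_mul_rhoH (f : ℂ → ℂ) {r : ℝ} (hr0 : 0 < r) (hr1 : r < 1) :
    discrepancy f (ball 0 r) = logNormalizer r * rhoH r f := by
  rw [rhoH_eq, ← mul_assoc, ENNReal.mul_inv_cancel (logNormalizer_ne_zero hr0 hr1)
    (logNormalizer_ne_top r), one_mul]

lemma logNormalizer_le_logNormalizer {s r : ℝ} (hs : 0 ≤ s) (hsr : s ≤ r) (hr : r < 1) :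
    logNormalizer s ≤ logNormalizer r := by
  refine ENNReal.ofReal_le_ofReal (Real.log_le_log (one_div_pos.2 (by nlinarith)) ?_)
  gcongr
  nlinarith

lemma logNormalizer_le_sq_add_one {r : ℝ} (hr : |r| < 1) :
    logNormalizer r ≤ logNormalizer (r ^ 2) + 1 := by
  have hr2 : 0 < 1 - r ^ 2 := by nlinarith [sq_abs r, abs_nonneg r]
  have hlog : Real.log (1 + r ^ 2) ≤ 1 := by
    have := Real.log_le_sub_one_of_pos (x := 1 + r ^ 2) (by positivity)
    nlinarith [sq_abs r, abs_nonneg r]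
  have hfactor : 1 - (r ^ 2) ^ 2 = (1 - r ^ 2) * (1 + r ^ 2) := by ring
  calc logNormalizer r ≤ ENNReal.ofReal (Real.log (1 / (1 - (r ^ 2) ^ 2)) + 1) :=
        ENNReal.ofReal_le_ofReal ?_
    _ ≤ logNormalizer (r ^ 2) + 1 :=
        ENNReal.ofReal_add_le.trans_eq (by rw [ENNReal.ofReal_one]; rfl)
  rw [hfactor, one_div, one_div, Real.log_inv, Real.log_inv, Real.log_mul hr2.ne' (by positivity)]
  linarith

lemma tendsto_logNormalizer_nhdsLT_one : Tendsto logNormalizer (𝓝[<] 1) (𝓝 ⊤) := by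
  have h1 : Tendsto (fun r : ℝ => 1 - r ^ 2) (𝓝[<] 1) (𝓝[>] 0) := by
    refine tendsto_nhdsWithin_of_tendsto_nhds_of_eventually_within _ ?_ ?_
    · have : Tendsto (fun r : ℝ => 1 - r ^ 2) (𝓝 1) (𝓝 (1 - 1 ^ 2)) :=
        (by fun_prop : Continuous fun r : ℝ => 1 - r ^ 2).tendsto 1
      simpa using this.mono_left nhdsWithin_le_nhds
    · filter_upwards [Ioo_mem_nhdsLT (show (0:ℝ) < 1 by norm_num)] with r hr
      exact mem_Ioi.2 (by nlinarith [hr.1, hr.2])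
  have h2 : Tendsto (fun x : ℝ => Real.log (1 / x)) (𝓝[>] 0) atTop := by
    refine (tendsto_neg_atBot_atTop.comp Real.tendsto_log_nhdsGT_zero).congr fun x => ?_
    rw [one_div, Real.log_inv, Function.comp_apply]
  exact ENNReal.tendsto_ofReal_atTop.comp (h2.comp h1)

end LogNormalizer

section Area

lemma dA_ball {t : ℝ} (ht : 0 ≤ t) : dA (ball (0:ℂ) t) = ENNReal.ofReal (t ^ 2) := by
  rw [dA, Measure.smul_apply, Complex.volume_ball, smul_eq_mul, ← ENNReal.ofReal_pow ht,
    ← NNReal.coe_real_pi, ENNReal.ofReal_coe_nnreal, mul_left_comm,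
    ENNReal.inv_mul_cancel (by simp [NNReal.pi_ne_zero]) ENNReal.coe_ne_top, mul_one]

lemma lintegral_comp_norm_eq {g : ℝ → ℝ≥0∞} (hg : Measurable g) :
    ∫⁻ z : ℂ, g ‖z‖ = ENNReal.ofReal (2 * Real.pi) * ∫⁻ t in Ioi 0, ENNReal.ofReal t * g t := by
  have hpolar : ∀ p ∈ Ioi (0:ℝ) ×ˢ Ioo (-Real.pi) Real.pi,
      ENNReal.ofReal p.1 • g ‖Complex.polarCoord.symm p‖ = ENNReal.ofReal p.1 * g p.1 * 1 := by
    rintro ⟨t, θ⟩ ⟨ht, -⟩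
    simp [abs_of_pos (show 0 < t from ht)]
  rw [← Complex.lintegral_comp_polarCoord_symm, polarCoord_target,
    setLIntegral_congr_fun (measurableSet_Ioi.prod measurableSet_Ioo) hpolar,
    Measure.volume_eq_prod, ← Measure.prod_restrict,
    lintegral_prod_mul (f := fun t => ENNReal.ofReal t * g t) (g := fun _ => 1) (by fun_prop)
      (by fun_prop)]
  simp only [lintegral_const, Measure.restrict_apply_univ, Real.volume_Ioo, one_mul]
  ring_nf

lemma integral_div_one_sub_sq {r : ℝ} (hr : r < 1) (hr' : -1 < r) :
    ∫ t in (0:ℝ)..r, t / (1 - t ^ 2) = Real.log (1 / (1 - r ^ 2)) / 2 := by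
  have hpos : ∀ t ∈ uIcc 0 r, 0 < 1 - t ^ 2 := by
    intro t ht
    rw [mem_uIcc] at ht
    rcases ht with ⟨h1, h2⟩ | ⟨h1, h2⟩ <;> nlinarith
  have hderiv : ∀ t ∈ uIcc 0 r,
      HasDerivAt (fun t => -Real.log (1 - t ^ 2) / 2) (t / (1 - t ^ 2)) t := fun t ht =>
    ((((hasDerivAt_pow 2 t).const_sub 1).log (hpos t ht).ne').neg.div_const 2).congr_deriv
      (by field_simp; ring)
  rw [intervalIntegral.integral_eq_sub_of_hasDerivAt hderiv]
  · simp [Real.log_inv]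
  · exact (ContinuousOn.div (by fun_prop) (by fun_prop) fun t ht =>
      (hpos t ht).ne').intervalIntegrable

lemma lintegral_ball_inv_one_sub_sq {r : ℝ} (hr0 : 0 ≤ r) (hr1 : r < 1) :
    ∫⁻ z in ball (0:ℂ) r, ENNReal.ofReal (1 / (1 - ‖z‖ ^ 2)) ∂dA = logNormalizer r := by
  set w : ℝ → ℝ≥0∞ := fun t => ENNReal.ofReal (1 / (1 - t ^ 2))
  have hind : (ball (0:ℂ) r).indicator (fun z => w ‖z‖) = fun z => (Iio r).indicator w ‖z‖ := by
    ext z; simp [indicator]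
  have hrad : ∫⁻ t in Ioi 0, ENNReal.ofReal t * (Iio r).indicator w t =
      ∫⁻ t in Ioo 0 r, ENNReal.ofReal (t / (1 - t ^ 2)) := by
    simp_rw [← indicator_mul_right]
    rw [setLIntegral_indicator measurableSet_Iio, inter_comm, Ioi_inter_Iio]
    refine setLIntegral_congr_fun measurableSet_Ioo fun t ht => ?_
    rw [← ENNReal.ofReal_mul ht.1.le, mul_one_div]
  have hint : IntegrableOn (fun t : ℝ => t / (1 - t ^ 2)) (Ioo 0 r) := by
    refine (ContinuousOn.integrableOn_Icc ?_).mono_set Ioo_subset_Icc_self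
    exact ContinuousOn.div (by fun_prop) (by fun_prop) fun t ht => by nlinarith [ht.1, ht.2]
  rw [dA, Measure.restrict_smul, lintegral_smul_measure, ← lintegral_indicator measurableSet_ball,
    hind, lintegral_comp_norm_eq (by measurability), hrad,
    ← ofReal_integral_eq_lintegral_ofReal hint (ae_restrict_of_forall_mem measurableSet_Ioo
      fun t ht => div_nonneg ht.1.le (by nlinarith [ht.1, ht.2])),
    ← integral_Ioc_eq_integral_Ioo, ← intervalIntegral.integral_of_le hr0,
    integral_div_one_sub_sq hr1 (by linarith), smul_eq_mul, ← ENNReal.ofReal_mul (by positivity),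
    mul_div_assoc', mul_div_right_comm, mul_div_cancel_left₀ _ two_ne_zero,
    ENNReal.ofReal_mul Real.pi_pos.le, ← mul_assoc,
    ENNReal.inv_mul_cancel (by simp [Real.pi_pos]) ENNReal.ofReal_ne_top, one_mul, logNormalizer]

lemma rhoH_zero {r : ℝ} (hr0 : 0 < r) (hr1 : r < 1) : rhoH r (fun _ => 0) = 1 := by
  have hzero : discrepancy (fun _ => 0) (ball 0 r) = logNormalizer r := by
    simpa [discrepancy] using lintegral_ball_inv_one_sub_sq hr0.le hr1
  rw [rhoH_eq, hzero, ENNReal.inv_mul_cancel (logNormalizer_ne_zero hr0 hr1)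
    (logNormalizer_ne_top r)]

lemma rhoHd_le_one : rhoHd ≤ 1 := by
  refine liminf_le_of_frequently_le' (Eventually.frequently ?_)
  filter_upwards [Ioo_mem_nhdsLT (show (0:ℝ) < 1 by norm_num)] with r hr
  exact iInf_le_of_le 0 (by simp only [eval_zero]; exact (rhoH_zero hr.1 hr.2).le)

end Area

section Density

lemma exists_polynomial_tendstoUniformlyOn {g : ℂ → ℂ} {R s : ℝ}
    (hg : DifferentiableOn ℂ g (ball 0 R)) (hs : 0 ≤ s) (hsR : s < R) :
    ∃ p : ℕ → ℂ[X], TendstoUniformlyOn (fun n z => (p n).eval z) g atTop (ball 0 s) := by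
  obtain ⟨v, hsv, hvR⟩ := exists_between hsR
  have hv : 0 < v := hs.trans_lt hsv
  have hgv : DifferentiableOn ℂ g (closedBall 0 v.toNNReal) := by
    rw [Real.coe_toNNReal v hv.le]
    exact hg.mono (closedBall_subset_ball hvR)
  have hps := hgv.hasFPowerSeriesOnBall (by simpa using hv)
  set P := cauchyPowerSeries g 0 v.toNNReal
  have hunif := hps.tendstoUniformlyOn (r' := s.toNNReal)
    (by exact_mod_cast Real.toNNReal_lt_toNNReal_iff'.mpr ⟨hsv, hv⟩)
  rw [Real.coe_toNNReal s hs] at hunif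
  refine ⟨fun n => ∑ i ∈ Finset.range n, C (P.coeff i) * X ^ i, ?_⟩
  convert hunif using 1
  · ext n z
    simp only [FormalMultilinearSeries.partialSum, eval_finsetSum, eval_mul, eval_C, eval_pow,
      eval_X, FormalMultilinearSeries.apply_eq_pow_smul_coeff, smul_eq_mul, mul_comm]
  · simp

lemma sq_mul_sub_one_le_sq_add_one {w a : ℝ} (hw0 : 0 ≤ w) (hw1 : w ≤ 1) (ha : 0 ≤ a) :
    (w * a - 1) ^ 2 ≤ (a + 1) ^ 2 := by
  have : w * a ≤ a := mul_le_of_le_one_left ha hw1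
  nlinarith [mul_nonneg hw0 ha]

lemma tendsto_discrepancy_of_tendstoUniformlyOn {F : ℕ → ℂ → ℂ} {g : ℂ → ℂ} {s : ℝ}
    (hs : s < 1) (hF : ∀ n, Continuous (F n)) (hFg : TendstoUniformlyOn F g atTop (ball 0 s)) :
    Tendsto (fun n => discrepancy (F n) (ball 0 s)) atTop (𝓝 (discrepancy g (ball 0 s))) := by
  obtain ⟨N, hN⟩ := eventually_atTop.1 (Metric.tendstoUniformlyOn_iff.1 hFg 1 one_pos)
  obtain ⟨M, hM⟩ := (isCompact_closedBall (0:ℂ) s).exists_bound_of_continuousOn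
    (hF N).continuousOn
  have hbound : ∀ n ≥ N, ∀ z ∈ ball (0:ℂ) s, ‖F n z‖ ≤ M + 2 := by
    intro n hn z hz
    have h1 := hN n hn z hz
    have h2 := hN N le_rfl z hz
    have h3 := hM z (ball_subset_closedBall hz)
    rw [dist_eq_norm] at h1 h2
    rw [norm_sub_rev] at h1
    have h4 := norm_sub_le_norm_sub_add_norm_sub (F n z) (g z) (F N z)
    have h5 := norm_le_norm_add_norm_sub' (F n z) (F N z)
    linarith
  have hw : ∀ z ∈ ball (0:ℂ) s, 0 < 1 - s ^ 2 ∧ 1 - s ^ 2 ≤ 1 - ‖z‖ ^ 2 ∧ 1 - ‖z‖ ^ 2 ≤ 1 := by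
    intro z hz
    have := mem_ball_zero_iff.1 hz
    refine ⟨?_, ?_, ?_⟩ <;> nlinarith [norm_nonneg z]
  refine tendsto_lintegral_filter_of_dominated_convergence
    (fun _ => ENNReal.ofReal ((M + 3) ^ 2 / (1 - s ^ 2)))
    (Eventually.of_forall fun n => by fun_prop) ?_ ?_ ?_
  · filter_upwards [eventually_ge_atTop N] with n hn
    refine ae_restrict_of_forall_mem measurableSet_ball fun z hz => ENNReal.ofReal_le_ofReal ?_
    obtain ⟨hs2, hws, hw1⟩ := hw z hz
    have hsq : ((1 - ‖z‖ ^ 2) * ‖F n z‖ - 1) ^ 2 ≤ (M + 3) ^ 2 := by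
      have := hbound n hn z hz
      nlinarith [sq_mul_sub_one_le_sq_add_one (hs2.trans_le hws).le hw1 (norm_nonneg (F n z)),
        norm_nonneg (F n z)]
    exact div_le_div₀ (by positivity) hsq hs2 hws
  · rw [lintegral_const, Measure.restrict_apply_univ, dA, Measure.smul_apply, smul_eq_mul]
    exact ENNReal.mul_ne_top ENNReal.ofReal_ne_top
      (ENNReal.mul_ne_top (by simp [Real.pi_pos]) measure_ball_lt_top.ne)
  · refine ae_restrict_of_forall_mem measurableSet_ball fun z hz => ?_
    have hcont : Continuous fun x : ℂ =>
        ENNReal.ofReal (((1 - ‖z‖ ^ 2) * ‖x‖ - 1) ^ 2 / (1 - ‖z‖ ^ 2)) :=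
      ENNReal.continuous_ofReal.comp (by fun_prop)
    exact (hcont.tendsto _).comp (hFg.tendsto_at hz)

lemma iInf_rhoH_polynomial_le {g : ℂ → ℂ} {s : ℝ} (hg : DifferentiableOn ℂ g (ball 0 1))
    (hs0 : 0 < s) (hs1 : s < 1) :
    (⨅ p : ℂ[X], rhoH s fun z => p.eval z) ≤ rhoH s g := by
  obtain ⟨p, hp⟩ := exists_polynomial_tendstoUniformlyOn hg hs0.le hs1
  have hlim := ENNReal.Tendsto.const_mul
    (tendsto_discrepancy_of_tendstoUniformlyOn hs1 (fun n => (p n).continuous) hp)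
    (Or.inr (ENNReal.inv_ne_top.2 (logNormalizer_ne_zero hs0 hs1)))
  exact ge_of_tendsto' hlim fun n => iInf_le _ (p n)

end Density

section Annulus

lemma discrepancy_ball_add_ann_le (f : ℂ → ℂ) {s R : ℝ} (hsR : s ≤ R) :
    discrepancy f (ball 0 s) + discrepancy f (ann s R) ≤ discrepancy f (ball 0 R) := by
  rw [discrepancy, discrepancy, discrepancy, ann,
    ← lintegral_union (measurableSet_ball.diff measurableSet_closedBall)
      (disjoint_sdiff_right.mono_left ball_subset_closedBall)]
  exact lintegral_mono_set (union_subset (ball_subset_ball hsR) sdiff_subset)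

lemma dA_ann_le {s R : ℝ} (hs : 0 ≤ s) (hsR : s ≤ R) :
    dA (ann s R) ≤ ENNReal.ofReal (R ^ 2 - s ^ 2) := by
  calc dA (ann s R) ≤ dA (ball 0 R \ ball 0 s) :=
        measure_mono (sdiff_subset_sdiff_right ball_subset_closedBall)
    _ = ENNReal.ofReal (R ^ 2 - s ^ 2) := by
        rw [measure_sdiff (ball_subset_ball hsR) measurableSet_ball.nullMeasurableSet
          (by rw [dA_ball hs]; exact ENNReal.ofReal_ne_top), dA_ball hs,
          dA_ball (hs.trans hsR), ← ENNReal.ofReal_sub _ (by positivity)]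

lemma sq_mul_le_two_mul_sq_div_add {a w : ℝ} (hw : 0 < w) :
    a ^ 2 * w ≤ 2 * ((w * a - 1) ^ 2 / w) + 2 / w := by
  rw [← mul_div_assoc, ← add_div, le_div_iff₀ hw]
  nlinarith [sq_nonneg (w * a - 2)]

lemma lintegral_ann_sq_le (f : ℂ → ℂ) {s R : ℝ} (hs : 0 ≤ s) (hsR : s ≤ R) (hR : R < 1) :
    ∫⁻ z in ann s R, ENNReal.ofReal (‖f z‖ ^ 2 * (1 - ‖z‖ ^ 2)) ∂dA ≤
      2 * discrepancy f (ann s R) + ENNReal.ofReal (2 * (R ^ 2 - s ^ 2) / (1 - R ^ 2)) := by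
  have hR2 : 0 < 1 - R ^ 2 := by nlinarith
  have hpt : ∀ z ∈ ann s R, ENNReal.ofReal (‖f z‖ ^ 2 * (1 - ‖z‖ ^ 2)) ≤
      2 * ENNReal.ofReal (((1 - ‖z‖ ^ 2) * ‖f z‖ - 1) ^ 2 / (1 - ‖z‖ ^ 2)) +
        ENNReal.ofReal (2 / (1 - R ^ 2)) := by
    intro z hz
    have hw : 1 - R ^ 2 ≤ 1 - ‖z‖ ^ 2 := by nlinarith [norm_nonneg z, mem_ball_zero_iff.1 hz.1]
    have hwz : 0 < 1 - ‖z‖ ^ 2 := hR2.trans_le hw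
    have h := sq_mul_le_two_mul_sq_div_add (a := ‖f z‖) hwz
    have h' : 2 / (1 - ‖z‖ ^ 2) ≤ 2 / (1 - R ^ 2) := div_le_div_of_nonneg_left zero_le_two hR2 hw
    rw [← ENNReal.ofReal_ofNat 2, ← ENNReal.ofReal_mul zero_le_two,
      ← ENNReal.ofReal_add (by positivity) (by positivity)]
    exact ENNReal.ofReal_le_ofReal (by linarith)
  calc _ ≤ ∫⁻ z in ann s R, (2 * ENNReal.ofReal (((1 - ‖z‖ ^ 2) * ‖f z‖ - 1) ^ 2 / (1 - ‖z‖ ^ 2))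
          + ENNReal.ofReal (2 / (1 - R ^ 2))) ∂dA :=
        setLIntegral_mono' (measurableSet_ball.diff measurableSet_closedBall) hpt
    _ = 2 * discrepancy f (ann s R) + ENNReal.ofReal (2 / (1 - R ^ 2)) * dA (ann s R) := by
        rw [lintegral_add_right _ measurable_const, lintegral_const_mul' _ _ (by norm_num),
          setLIntegral_const, discrepancy]
    _ ≤ 2 * discrepancy f (ann s R) + ENNReal.ofReal (2 / (1 - R ^ 2)) *
          ENNReal.ofReal (R ^ 2 - s ^ 2) := by grw [dA_ann_le hs hsR]
    _ = _ := by rw [← ENNReal.ofReal_mul (by positivity), div_mul_eq_mul_div]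

end Annulus

lemma eventually_liminf_sub_le {ι β : Type*} {u : β → ℝ≥0∞} {f : Filter β} {l : Filter ι}
    {v : ι → β} (hv : Tendsto v l f) (hu : liminf u f ≠ ⊤) {η : ℝ≥0∞} (hη : η ≠ 0) :
    ∀ᶠ i in l, liminf u f - η ≤ u (v i) := by
  rcases eq_or_ne (liminf u f - η) 0 with h | h
  · exact Eventually.of_forall fun _ => h ▸ zero_le
  · have hlt : liminf u f - η < liminf u f :=
      ENNReal.sub_lt_self hu (fun h0 => h (by simp [h0])) hη
    exact (hv.eventually (eventually_lt_of_lt_liminf hlt)).mono fun _ => le_of_lt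

section Nonconcentration

variable {f : ℂ → ℂ} {r : ℝ} {θ₁ θ₂ η : ℝ≥0∞}

lemma discrepancy_ann_le_of_isMinH (hr0 : 0 < r) (hr1 : r < 1) (hf : IsMinH r f)
    (hup : (⨅ p : ℂ[X], rhoH r fun z => p.eval z) ≤ θ₂)
    (hlow : θ₁ ≤ ⨅ p : ℂ[X], rhoH (r ^ 2) fun z => p.eval z)
    (hθ : θ₂ ≤ θ₁ + 2 * η) (hθ₁ : θ₁ ≠ ⊤) :
    discrepancy f (ann (r ^ 2) r) ≤ 2 * logNormalizer r * η + θ₂ := by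
  set L := logNormalizer r
  set L' := logNormalizer (r ^ 2)
  have hr2 : r ^ 2 < 1 := pow_lt_one₀ hr0.le hr1 two_ne_zero
  have hr2r : r ^ 2 ≤ r := by nlinarith
  have hDr : discrepancy f (ball 0 r) ≤ L * θ₂ := by
    rw [discrepancy_ball_eq_mul_rhoH f hr0 hr1]
    gcongr
    exact (le_iInf fun p => hf.2 _ p.differentiable.differentiableOn).trans hup
  have hDs : L' * θ₁ ≤ discrepancy f (ball 0 (r ^ 2)) := by
    rw [discrepancy_ball_eq_mul_rhoH f (by positivity) hr2]
    gcongr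
    exact hlow.trans (iInf_rhoH_polynomial_le hf.1 (by positivity) hr2)
  have hL'L : L' ≤ L := logNormalizer_le_logNormalizer (by positivity) hr2r hr1
  have hLL' : L ≤ L' + 1 := logNormalizer_le_sq_add_one (by rwa [abs_of_pos hr0])
  refine ENNReal.le_of_add_le_add_left (ENNReal.mul_ne_top (logNormalizer_ne_top (r ^ 2)) hθ₁) ?_
  calc L' * θ₁ + discrepancy f (ann (r ^ 2) r)
      ≤ discrepancy f (ball 0 (r ^ 2)) + discrepancy f (ann (r ^ 2) r) := by gcongr
    _ ≤ L * θ₂ := (discrepancy_ball_add_ann_le f hr2r).trans hDr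
    _ ≤ L' * θ₂ + θ₂ := by grw [hLL', add_mul, one_mul]
    _ ≤ L' * (θ₁ + 2 * η) + θ₂ := by gcongr
    _ = L' * θ₁ + (2 * L' * η + θ₂) := by ring
    _ ≤ L' * θ₁ + (2 * L * η + θ₂) := by gcongr

lemma inv_logNormalizer_mul_lintegral_ann_le (hr0 : 0 < r) (hr1 : r < 1) (hf : IsMinH r f)
    (hup : (⨅ p : ℂ[X], rhoH r fun z => p.eval z) ≤ θ₂)
    (hlow : θ₁ ≤ ⨅ p : ℂ[X], rhoH (r ^ 2) fun z => p.eval z)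
    (hθ : θ₂ ≤ θ₁ + 2 * η) (hθ₁ : θ₁ ≠ ⊤) :
    (logNormalizer r)⁻¹ * ∫⁻ z in ann (r ^ 2) r, ENNReal.ofReal (‖f z‖ ^ 2 * (1 - ‖z‖ ^ 2)) ∂dA ≤
      4 * η + (logNormalizer r)⁻¹ * (2 * θ₂ + 2) := by
  set L := logNormalizer r
  have hr2 : 0 < 1 - r ^ 2 := by nlinarith
  have hrem : ENNReal.ofReal (2 * (r ^ 2 - (r ^ 2) ^ 2) / (1 - r ^ 2)) ≤ 2 := by
    rw [show 2 * (r ^ 2 - (r ^ 2) ^ 2) / (1 - r ^ 2) = 2 * r ^ 2 by field_simp,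
      ← ENNReal.ofReal_ofNat 2]
    exact ENNReal.ofReal_le_ofReal (by nlinarith)
  calc L⁻¹ * ∫⁻ z in ann (r ^ 2) r, ENNReal.ofReal (‖f z‖ ^ 2 * (1 - ‖z‖ ^ 2)) ∂dA
      ≤ L⁻¹ * (2 * (2 * L * η + θ₂) + 2) := by
        grw [lintegral_ann_sq_le f (by positivity) (by nlinarith) hr1, hrem,
          discrepancy_ann_le_of_isMinH hr0 hr1 hf hup hlow hθ hθ₁]
    _ = 4 * η * (L⁻¹ * L) + L⁻¹ * (2 * θ₂ + 2) := by ring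
    _ = 4 * η + L⁻¹ * (2 * θ₂ + 2) := by
        rw [ENNReal.inv_mul_cancel (logNormalizer_ne_zero hr0 hr1) (logNormalizer_ne_top r),
          mul_one]

end Nonconcentration

lemma eventually_inv_logNormalizer_mul_lintegral_ann_le {r : ℕ → ℝ}
    (hr : ∀ k, r k ∈ Ioo (0:ℝ) 1) (hr1 : Tendsto r atTop (𝓝 1))
    (hinf : Tendsto (fun k => ⨅ p : ℂ[X], rhoH (r k) fun z => p.eval z) atTop (𝓝 rhoHd))
    {f : ℕ → ℂ → ℂ} (hf : ∀ k, IsMinH (r k) (f k)) {η : ℝ≥0∞} (hη : η ≠ 0) (hη' : η ≠ ⊤) :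
    ∀ᶠ k in atTop, (logNormalizer (r k))⁻¹ *
      ∫⁻ z in ann (r k ^ 2) (r k), ENNReal.ofReal (‖f k z‖ ^ 2 * (1 - ‖z‖ ^ 2)) ∂dA ≤ 5 * η := by
  have hρ : rhoHd ≠ ⊤ := ne_top_of_le_ne_top ENNReal.one_ne_top rhoHd_le_one
  have hr' : Tendsto r atTop (𝓝[<] 1) := tendsto_nhdsWithin_of_tendsto_nhds_of_eventually_within _
    hr1 (Eventually.of_forall fun k => (hr k).2)
  have hr2 : Tendsto (fun k => r k ^ 2) atTop (𝓝[<] 1) :=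
    tendsto_nhdsWithin_of_tendsto_nhds_of_eventually_within _ (by simpa using hr1.pow 2)
      (Eventually.of_forall fun k => pow_lt_one₀ (hr k).1.le (hr k).2 two_ne_zero)
  have hθ : rhoHd + η ≤ rhoHd - η + 2 * η := by
    grw [two_mul, ← add_assoc, ← le_tsub_add]
  have hupper : ∀ᶠ k in atTop, (⨅ p : ℂ[X], rhoH (r k) fun z => p.eval z) ≤ rhoHd + η :=
    (hinf.eventually (gt_mem_nhds (ENNReal.lt_add_right hρ hη))).mono fun _ => le_of_lt
  have hsmall : ∀ᶠ k in atTop, (logNormalizer (r k))⁻¹ * (2 * (rhoHd + η) + 2) ≤ η := by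
    have hLinv : Tendsto (fun k => (logNormalizer (r k))⁻¹) atTop (𝓝 0) := by
      simpa using tendsto_inv_iff.2 (tendsto_logNormalizer_nhdsLT_one.comp hr')
    have := ENNReal.Tendsto.mul_const (b := 2 * (rhoHd + η) + 2) hLinv (Or.inr (by finiteness))
    rw [zero_mul] at this
    exact this.eventually (eventually_le_nhds (pos_iff_ne_zero.2 hη))
  filter_upwards [hupper, eventually_liminf_sub_le hr2 hρ hη, hsmall] with k hup hlow hk
  calc _ ≤ 4 * η + (logNormalizer (r k))⁻¹ * (2 * (rhoHd + η) + 2) :=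
        inv_logNormalizer_mul_lintegral_ann_le (hr k).1 (hr k).2 (hf k) hup hlow hθ
          (ne_top_of_le_ne_top hρ tsub_le_self)
    _ ≤ 4 * η + η := by gcongr
    _ = 5 * η := by ring

/-- hyperbolic L²-non-concentration. Let `r_k ∈ (0,1)` tend to 1 with
`inf_f ρ_{H,r_k}(f) → ρ_H`, set `δ_k = 1 - r_k`, and let `f_k` minimize `ρ_{H,r_k}`.
Then `(1/log(1/(1-r_k²))) ∫_{𝔸(r_k(1-δ_k),r_k)} |f_k|² (1-|z|²) dA → 0`. -/
theorem hyperbolic_L2_nonconcentration (r : ℕ → ℝ) (hr : ∀ k, r k ∈ Ioo (0:ℝ) 1)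
    (hr1 : Tendsto r atTop (𝓝 1))
    (hinf : Tendsto (fun k => ⨅ p : Polynomial ℂ, rhoH (r k) fun z => p.eval z)
      atTop (𝓝 rhoHd))
    (δ : ℕ → ℝ) (hδ : ∀ k, δ k = 1 - r k)
    (f : ℕ → ℂ → ℂ) (hf : ∀ k, IsMinH (r k) (f k)) :
    Tendsto (fun k => (ENNReal.ofReal (Real.log (1 / (1 - (r k) ^ 2))))⁻¹ *
        ∫⁻ z in ann (r k * (1 - δ k)) (r k), ENNReal.ofReal
          (‖f k z‖ ^ 2 * (1 - ‖z‖ ^ 2)) ∂dA)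
      atTop (𝓝 0) := by
  have hsq : ∀ k, r k * (1 - δ k) = r k ^ 2 := fun k => by rw [hδ]; ring
  simp only [hsq]
  refine ENNReal.tendsto_nhds_zero.2 fun ε hε => ?_
  rcases eq_or_ne ε ⊤ with rfl | hε'
  · exact Eventually.of_forall fun _ => le_top
  refine (eventually_inv_logNormalizer_mul_lintegral_ann_le hr hr1 hinf hf (η := ε / 5)
    (ENNReal.div_pos hε.ne' (by norm_num)).ne' (ENNReal.div_ne_top hε' (by norm_num))).mono
    fun k hk => hk.trans_eq ?_
  exact ENNReal.mul_div_cancel' (by norm_num) (by norm_num)
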